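/- arXiv:2108.08945 — 2 statements merged into one kernel-verified Lean document; each statement's English description precedes it below -/
import Mathlib

section
/- Pointwise strong monotonicity with plasticity term: for all A, B in a real inner product space and ε > 0, ⟨2μ·A + τ·A/|A|_ε − 2μ·B − τ·B/|B|_ε, A − B⟩ ≥ 2μ‖A − B‖², where μ > 0 and τ ≥ 0. -/
/-!
`T` is `2μ • id` plus the radial map `A ↦ f ‖A‖ • A` with `f t = τ / √(t² + ε²)`. By
Cauchy–Schwarz, a radial map with `f ≥ 0` and `t ↦ t * f t` nondecreasing on `[0, ∞)` is
monotone, and `t ↦ t / √(t² + ε²)` is nondecreasing there.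
-/

open RealInnerProductSpace Set

section RadialMaps

variable {V : Type*} [NormedAddCommGroup V] [InnerProductSpace ℝ V]

theorem mul_norm_sub_mul_norm_mul_sub_le_inner {a b : ℝ} (ha : 0 ≤ a) (hb : 0 ≤ b) (A B : V) :
    (‖A‖ * a - ‖B‖ * b) * (‖A‖ - ‖B‖) ≤ ⟪a • A - b • B, A - B⟫ := by
  have hexpand : ⟪a • A - b • B, A - B⟫ = a * ‖A‖ ^ 2 + b * ‖B‖ ^ 2 - (a + b) * ⟪A, B⟫ := by
    simp only [inner_sub_left, inner_sub_right, real_inner_smul_left,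
      real_inner_self_eq_norm_sq, real_inner_comm A B]
    ring
  rw [hexpand]
  nlinarith [mul_le_mul_of_nonneg_left (real_inner_le_norm A B) (add_nonneg ha hb)]

theorem inner_smul_sub_smul_nonneg_of_monotoneOn {f : ℝ → ℝ} (hf : ∀ t, 0 ≤ t → 0 ≤ f t)
    (hmono : MonotoneOn (fun t => t * f t) (Ici 0)) (A B : V) :
    0 ≤ ⟪f ‖A‖ • A - f ‖B‖ • B, A - B⟫ := by
  refine le_trans ?_ (mul_norm_sub_mul_norm_mul_sub_le_inner
    (hf _ (norm_nonneg A)) (hf _ (norm_nonneg B)) A B)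
  have hA : ‖A‖ ∈ Ici (0 : ℝ) := norm_nonneg A
  have hB : ‖B‖ ∈ Ici (0 : ℝ) := norm_nonneg B
  rcases le_total ‖A‖ ‖B‖ with h | h
  · exact mul_nonneg_of_nonpos_of_nonpos (sub_nonpos.2 (hmono hA hB h)) (sub_nonpos.2 h)
  · exact mul_nonneg (sub_nonneg.2 (hmono hB hA h)) (sub_nonneg.2 h)

end RadialMaps

theorem div_sqrt_sq_add_sq_le_div_sqrt_sq_add_sq {s t : ℝ} (ε : ℝ) (hs : 0 ≤ s) (hst : s ≤ t) :
    s / √(s ^ 2 + ε ^ 2) ≤ t / √(t ^ 2 + ε ^ 2) := by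
  rcases hs.eq_or_lt with rfl | hs
  · simp only [zero_div]
    positivity
  have ht : 0 < t := hs.trans_le hst
  rw [div_le_div_iff₀ (by positivity) (by positivity),
    ← pow_le_pow_iff_left₀ (by positivity) (by positivity) two_ne_zero,
    mul_pow, mul_pow, Real.sq_sqrt (by positivity), Real.sq_sqrt (by positivity)]
  nlinarith [mul_le_mul_of_nonneg_right (pow_le_pow_left₀ hs.le hst 2) (sq_nonneg ε)]

theorem monotoneOn_mul_div_sqrt_sq_add_sq {τ : ℝ} (hτ : 0 ≤ τ) (ε : ℝ) :
    MonotoneOn (fun t => t * (τ / √(t ^ 2 + ε ^ 2))) (Ici 0) := by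
  intro s hs t _ hst
  simp only [mul_div_left_comm _ τ]
  exact mul_le_mul_of_nonneg_left (div_sqrt_sq_add_sq_le_div_sqrt_sq_add_sq ε hs hst) hτ

theorem bingham_strong_monotonicity_general
    {V : Type*} [NormedAddCommGroup V] [InnerProductSpace ℝ V]
    (ε μ τ : ℝ) (hτ : 0 ≤ τ)
    (T : V → V)
    (hT : ∀ A : V, T A = (2 * μ) • A + (τ / Real.sqrt (‖A‖ ^ 2 + ε ^ 2)) • A)
    (A B : V) :
    2 * μ * ‖A - B‖ ^ 2 ≤ ⟪T A - T B, A - B⟫ := by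
  set f : ℝ → ℝ := fun t => τ / √(t ^ 2 + ε ^ 2)
  have hsplit : T A - T B = (2 * μ) • (A - B) + (f ‖A‖ • A - f ‖B‖ • B) := by
    rw [hT A, hT B, smul_sub]
    abel
  have hplastic : 0 ≤ ⟪f ‖A‖ • A - f ‖B‖ • B, A - B⟫ :=
    inner_smul_sub_smul_nonneg_of_monotoneOn (fun _ _ => by positivity)
      (monotoneOn_mul_div_sqrt_sq_add_sq hτ ε) A B
  rw [hsplit, inner_add_left, real_inner_smul_left, real_inner_self_eq_norm_sq]
  linarith

theorem bingham_strong_monotonicity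
    {V : Type*} [NormedAddCommGroup V] [InnerProductSpace ℝ V]
    (ε μ τ : ℝ) (hε : 0 < ε) (hμ : 0 < μ) (hτ : 0 ≤ τ)
    (T : V → V)
    (hT : ∀ A : V, T A = (2 * μ) • A + (τ / Real.sqrt (‖A‖ ^ 2 + ε ^ 2)) • A)
    (A B : V) :
    2 * μ * ‖A - B‖ ^ 2 ≤ ⟪T A - T B, A - B⟫ :=
  bingham_strong_monotonicity_general ε μ τ hτ T hT A B
end

section
/- Taylor remainder bound for the reciprocal regularized norm: there is an absolute constant C such that for all A, h in a real inner product space and ε > 0, |1/|A+h|_ε − 1/|A|_ε + ⟨A,h⟩/|A|_ε³| ≤ C ε^{-3} ‖h‖². -/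
open RealInnerProductSpace

lemma key_taylor (ε a b t s : ℝ) (hε : 0 < ε) (ha : ε ≤ a) (hb : ε ≤ b)
    (ht : |t| ≤ a * s) (hs : 0 ≤ s) (hba : |b - a| ≤ s)
    (hrel : b ^ 2 = a ^ 2 + 2 * t + s ^ 2) :
    |b⁻¹ - a⁻¹ + t / a ^ 3| ≤ 3 * ε⁻¹ ^ 3 * s ^ 2 := by
  have ha0 : 0 < a := lt_of_lt_of_le hε ha
  have hb0 : 0 < b := lt_of_lt_of_le hε hb
  have hab0 : 0 < a + b := by linarith
  have ha' : a ≠ 0 := ha0.ne'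
  have hb' : b ≠ 0 := hb0.ne'
  have hab' : a + b ≠ 0 := hab0.ne'
  have hs2 : s ^ 2 = b ^ 2 - a ^ 2 - 2 * t := by linarith
  have hid : b⁻¹ - a⁻¹ + t / a ^ 3 =
      -(s ^ 2) / (a * b * (a + b)) +
        t * (b ^ 2 - a ^ 2) * (b + 2 * a) / (a ^ 3 * b * (a + b) ^ 2) := by
    rw [hs2]; field_simp; ring
  rw [hid]
  have hD1 : (0:ℝ) < a * b * (a + b) := by positivity
  have hD2 : (0:ℝ) < a ^ 3 * b * (a + b) ^ 2 := by positivity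
  have hee : ε * ε ≤ a * b := mul_le_mul ha hb hε.le ha0.le
  have hee' : ε * ε ≤ a * a := mul_le_mul ha ha hε.le ha0.le
  have he3 : ε ^ 3 ≤ a * b * (a + b) := by nlinarith
  have he3' : ε ^ 3 ≤ a ^ 2 * b := by nlinarith
  have hnum : |t * (b ^ 2 - a ^ 2) * (b + 2 * a)| ≤ (a * s) * ((a + b) * s) * (2 * (a + b)) := by
    rw [abs_mul, abs_mul]
    have h1 : |b ^ 2 - a ^ 2| ≤ (a + b) * s := by
      have : b ^ 2 - a ^ 2 = (b - a) * (b + a) := by ring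
      rw [this, abs_mul, abs_of_pos (by linarith : (0:ℝ) < b + a)]
      calc |b - a| * (b + a) ≤ s * (b + a) := by gcongr
        _ = (a + b) * s := by ring
    have h2 : |b + 2 * a| ≤ 2 * (a + b) := by
      rw [abs_of_pos (by linarith : (0:ℝ) < b + 2 * a)]; linarith
    gcongr
  have e1 : |(-(s ^ 2) / (a * b * (a + b)))| = s ^ 2 / (a * b * (a + b)) := by
    rw [abs_div, abs_neg, abs_of_nonneg (by positivity : (0:ℝ) ≤ s ^ 2),
      abs_of_pos hD1]
  calc |(-(s ^ 2) / (a * b * (a + b)) +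
        t * (b ^ 2 - a ^ 2) * (b + 2 * a) / (a ^ 3 * b * (a + b) ^ 2))|
      ≤ |(-(s ^ 2) / (a * b * (a + b)))| +
        |t * (b ^ 2 - a ^ 2) * (b + 2 * a)| / (a ^ 3 * b * (a + b) ^ 2) := by
        refine (abs_add_le _ _).trans ?_
        rw [abs_div (t * (b ^ 2 - a ^ 2) * (b + 2 * a)) (a ^ 3 * b * (a + b) ^ 2), abs_of_pos hD2]
    _ ≤ s ^ 2 / (a * b * (a + b)) +
        ((a * s) * ((a + b) * s) * (2 * (a + b))) / (a ^ 3 * b * (a + b) ^ 2) := by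
        rw [e1]; gcongr
    _ = s ^ 2 / (a * b * (a + b)) + 2 * s ^ 2 / (a ^ 2 * b) := by
        field_simp
    _ ≤ s ^ 2 / ε ^ 3 + 2 * s ^ 2 / ε ^ 3 := by
        gcongr
    _ = 3 * ε⁻¹ ^ 3 * s ^ 2 := by
        rw [inv_pow]; field_simp; ring

open RealInnerProductSpace

theorem regularized_inv_norm_taylor_bound
    {V : Type*} [NormedAddCommGroup V] [InnerProductSpace ℝ V] :
    ∃ C : ℝ, 0 < C ∧ ∀ (ε : ℝ), 0 < ε → ∀ A h : V,
      |(Real.sqrt (‖A + h‖ ^ 2 + ε ^ 2))⁻¹ - (Real.sqrt (‖A‖ ^ 2 + ε ^ 2))⁻¹ +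
          ⟪A, h⟫ / (Real.sqrt (‖A‖ ^ 2 + ε ^ 2)) ^ 3| ≤
        C * ε⁻¹ ^ 3 * ‖h‖ ^ 2 := by
  refine ⟨3, by norm_num, fun ε hε A h => ?_⟩
  set a := Real.sqrt (‖A‖ ^ 2 + ε ^ 2) with ha_def
  set b := Real.sqrt (‖A + h‖ ^ 2 + ε ^ 2) with hb_def
  have hA2 : (0:ℝ) ≤ ‖A‖ ^ 2 + ε ^ 2 := by positivity
  have hB2 : (0:ℝ) ≤ ‖A + h‖ ^ 2 + ε ^ 2 := by positivity
  have ha2 : a ^ 2 = ‖A‖ ^ 2 + ε ^ 2 := Real.sq_sqrt hA2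
  have hb2 : b ^ 2 = ‖A + h‖ ^ 2 + ε ^ 2 := Real.sq_sqrt hB2
  have ha : ε ≤ a := by
    rw [ha_def]
    calc ε = Real.sqrt (ε ^ 2) := by rw [Real.sqrt_sq hε.le]
      _ ≤ _ := Real.sqrt_le_sqrt (by nlinarith [sq_nonneg ‖A‖])
  have hb : ε ≤ b := by
    rw [hb_def]
    calc ε = Real.sqrt (ε ^ 2) := by rw [Real.sqrt_sq hε.le]
      _ ≤ _ := Real.sqrt_le_sqrt (by nlinarith [sq_nonneg ‖A + h‖])
  have ha0 : 0 < a := lt_of_lt_of_le hε ha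
  have hb0 : 0 < b := lt_of_lt_of_le hε hb
  have hAa : ‖A‖ ≤ a := by
    rw [ha_def]
    calc ‖A‖ = Real.sqrt (‖A‖ ^ 2) := by rw [Real.sqrt_sq (norm_nonneg A)]
      _ ≤ _ := Real.sqrt_le_sqrt (by nlinarith [sq_nonneg ε])
  have hAb : ‖A + h‖ ≤ b := by
    rw [hb_def]
    calc ‖A + h‖ = Real.sqrt (‖A + h‖ ^ 2) := by rw [Real.sqrt_sq (norm_nonneg _)]
      _ ≤ _ := Real.sqrt_le_sqrt (by nlinarith [sq_nonneg ε])
  have ht : |⟪A, h⟫| ≤ a * ‖h‖ := by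
    calc |⟪A, h⟫| ≤ ‖A‖ * ‖h‖ := abs_real_inner_le_norm A h
      _ ≤ a * ‖h‖ := by gcongr
  have hrel : b ^ 2 = a ^ 2 + 2 * ⟪A, h⟫ + ‖h‖ ^ 2 := by
    rw [ha2, hb2, norm_add_sq_real]; ring
  -- Lipschitz estimate |b - a| ≤ ‖h‖
  have hba : |b - a| ≤ ‖h‖ := by
    have key : |b - a| * (b + a) ≤ |‖A + h‖ - ‖A‖| * (b + a) := by
      have h1 : |b - a| * (b + a) = |‖A + h‖ - ‖A‖| * (‖A + h‖ + ‖A‖) := by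
        have e : (b - a) * (b + a) = (‖A + h‖ - ‖A‖) * (‖A + h‖ + ‖A‖) := by
          nlinarith [hrel, norm_add_sq_real A h]
        have := congrArg abs e
        rwa [abs_mul, abs_mul, abs_of_pos (by linarith : (0:ℝ) < b + a),
          abs_of_nonneg (by positivity : (0:ℝ) ≤ ‖A + h‖ + ‖A‖)] at this
      rw [h1]
      exact mul_le_mul_of_nonneg_left (by linarith) (abs_nonneg _)
    have h2 : |b - a| ≤ |‖A + h‖ - ‖A‖| :=
      le_of_mul_le_mul_right key (by linarith : (0:ℝ) < b + a)
    calc |b - a| ≤ |‖A + h‖ - ‖A‖| := h2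
      _ ≤ ‖A + h - A‖ := abs_norm_sub_norm_le _ _
      _ = ‖h‖ := by rw [add_sub_cancel_left]
  exact key_taylor ε a b ⟪A, h⟫ ‖h‖ hε ha hb ht (norm_nonneg h) hba hrel
end
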